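/- Let ε > 0 and ω ∈ ℝ. Define Cos_ω(n) := (E_{iω}(n) + E_{-iω}(n))/2 and Sin_ω(n) := (E_{iω}(n) - E_{-iω}(n))/(2i), where E_{±iω}(n) := ((1 ± iεω/2)/(1 ∓ iεω/2))^n. Then both x = Cos_ω and x = Sin_ω satisfy, for all n ∈ ℤ: (x(n+2) - 2x(n+1) + x(n))/ε² + ω²·(x(n) + 2x(n+1) + x(n+2))/4 = 0. -/

import Mathlib

/-- E_{iω} on the time scale εℤ. -/
noncomputable def cayleyExpI (ε ω : ℝ) (n : ℤ) : ℂ :=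
  ((1 + Complex.I * (ε : ℂ) * (ω : ℂ) / 2) / (1 - Complex.I * (ε : ℂ) * (ω : ℂ) / 2)) ^ n

/-- E_{-iω} on the time scale εℤ. -/
noncomputable def cayleyExpNegI (ε ω : ℝ) (n : ℤ) : ℂ :=
  ((1 - Complex.I * (ε : ℂ) * (ω : ℂ) / 2) / (1 + Complex.I * (ε : ℂ) * (ω : ℂ) / 2)) ^ n

/-- The Cayley-cosine on εℤ. -/
noncomputable def cayleyCos (ε ω : ℝ) (n : ℤ) : ℂ :=
  (cayleyExpI ε ω n + cayleyExpNegI ε ω n) / 2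

/-- The Cayley-sine on εℤ. -/
noncomputable def cayleySin (ε ω : ℝ) (n : ℤ) : ℂ :=
  (cayleyExpI ε ω n - cayleyExpNegI ε ω n) / (2 * Complex.I)

/-!
A Cayley exponential is a geometric sequence `n ↦ q ^ n`, and the oscillator operator sends
`q ^ n` to `q ^ n` times the characteristic polynomial `(q - 1)² / ε² + ω² (q + 1)² / 4`.
For the Cayley ratio `q = (1 + z) / (1 - z)` with `z = iεω/2` one has `q - 1 = 2z / (1 - z)` and
`q + 1 = 2 / (1 - z)`, so the characteristic polynomial is a multiple of `z² + ε²ω²/4 = 0`.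
Since `E_{-iω} = E_{i(-ω)}` and the operator only sees `ω²`, both exponentials are solutions,
and so are their linear combinations `Cos_ω` and `Sin_ω`.
-/

open Complex

/-- The left-hand side of `x^{ΔΔ} + ω² ⟨⟨x⟩⟩ = 0` on `εℤ`, at the point `εn`. -/
noncomputable def oscillatorResidual (ε ω : ℝ) (x : ℤ → ℂ) (n : ℤ) : ℂ :=
  (x (n + 2) - 2 * x (n + 1) + x n) / (ε : ℂ) ^ 2
    + (ω : ℂ) ^ 2 * (x n + 2 * x (n + 1) + x (n + 2)) / 4

lemma oscillatorResidual_zpow (ε ω : ℝ) {q : ℂ} (hq : q ≠ 0) (n : ℤ) :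
    oscillatorResidual ε ω (fun k ↦ q ^ k) n
      = q ^ n * ((q - 1) ^ 2 / (ε : ℂ) ^ 2 + (ω : ℂ) ^ 2 * (q + 1) ^ 2 / 4) := by
  simp only [oscillatorResidual, zpow_add₀ hq, zpow_ofNat]
  ring

lemma one_add_I_mul_mul_div_two_ne_zero (ε ω : ℝ) : 1 + I * ε * ω / 2 ≠ 0 :=
  fun h ↦ by simpa using congrArg re h

lemma one_sub_I_mul_mul_div_two_ne_zero (ε ω : ℝ) : 1 - I * ε * ω / 2 ≠ 0 :=
  fun h ↦ by simpa using congrArg re h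

noncomputable def cayleyRatio (ε ω : ℝ) : ℂ :=
  (1 + I * ε * ω / 2) / (1 - I * ε * ω / 2)

lemma cayleyRatio_ne_zero (ε ω : ℝ) : cayleyRatio ε ω ≠ 0 :=
  div_ne_zero (one_add_I_mul_mul_div_two_ne_zero ε ω) (one_sub_I_mul_mul_div_two_ne_zero ε ω)

lemma cayleyRatio_charPoly (ε ω : ℝ) (hε : ε ≠ 0) :
    (cayleyRatio ε ω - 1) ^ 2 / (ε : ℂ) ^ 2 + (ω : ℂ) ^ 2 * (cayleyRatio ε ω + 1) ^ 2 / 4 = 0 := by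
  have hz := one_sub_I_mul_mul_div_two_ne_zero ε ω
  have hεC : (ε : ℂ) ≠ 0 := ofReal_ne_zero.mpr hε
  have hsub : cayleyRatio ε ω - 1 = I * ε * ω / (1 - I * ε * ω / 2) := by
    rw [cayleyRatio, div_sub_one hz]
    ring
  have hadd : cayleyRatio ε ω + 1 = 2 / (1 - I * ε * ω / 2) := by
    rw [cayleyRatio, div_add_one hz]
    ring
  rw [hsub, hadd]
  field_simp
  rw [I_sq]
  ring

lemma cayleyExpNegI_eq_cayleyExpI_neg (ε ω : ℝ) (n : ℤ) :
    cayleyExpNegI ε ω n = cayleyExpI ε (-ω) n := by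
  simp only [cayleyExpNegI, cayleyExpI, ofReal_neg, mul_neg, neg_div, sub_neg_eq_add,
    ← sub_eq_add_neg]

lemma oscillatorResidual_cayleyExpI (ε ω : ℝ) (hε : ε ≠ 0) (n : ℤ) :
    oscillatorResidual ε ω (cayleyExpI ε ω) n = 0 := by
  rw [show cayleyExpI ε ω = fun k ↦ cayleyRatio ε ω ^ k from rfl,
    oscillatorResidual_zpow ε ω (cayleyRatio_ne_zero ε ω), cayleyRatio_charPoly ε ω hε, mul_zero]

lemma oscillatorResidual_cayleyExpNegI (ε ω : ℝ) (hε : ε ≠ 0) (n : ℤ) :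
    oscillatorResidual ε ω (cayleyExpNegI ε ω) n = 0 := by
  have h := oscillatorResidual_cayleyExpI ε (-ω) hε n
  simp only [oscillatorResidual, ofReal_neg, neg_sq] at h ⊢
  simpa only [cayleyExpNegI_eq_cayleyExpI_neg] using h

/-- Cayley-trigonometric functions on εℤ satisfy the second-order
oscillator dynamic equation x^{ΔΔ} + ω²·⟨⟨x⟩⟩ = 0. -/
theorem stmt14 (ε : ℝ) (hε : 0 < ε) (ω : ℝ) :
    ∀ n : ℤ,
      (cayleyCos ε ω (n + 2) - 2 * cayleyCos ε ω (n + 1) + cayleyCos ε ω n) / (ε : ℂ) ^ 2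
        + (ω : ℂ) ^ 2 * (cayleyCos ε ω n + 2 * cayleyCos ε ω (n + 1) + cayleyCos ε ω (n + 2)) / 4
        = 0 ∧
      (cayleySin ε ω (n + 2) - 2 * cayleySin ε ω (n + 1) + cayleySin ε ω n) / (ε : ℂ) ^ 2
        + (ω : ℂ) ^ 2 * (cayleySin ε ω n + 2 * cayleySin ε ω (n + 1) + cayleySin ε ω (n + 2)) / 4
        = 0 := by
  intro n
  have hE := oscillatorResidual_cayleyExpI ε ω hε.ne' n
  have hE' := oscillatorResidual_cayleyExpNegI ε ω hε.ne' n
  rw [oscillatorResidual] at hE hE'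
  constructor
  · simp only [cayleyCos]
    linear_combination (hE + hE') / 2
  · simp only [cayleySin]
    linear_combination (hE - hE') / (2 * I)
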